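/- Let α > 0 and S ∈ (0, α). Suppose u ∈ H²((-1,1);(0,∞)) satisfies u(±1) = α, u'(±1) = 0, is even, and max_{x∈[-1,1]}|u'(x)| ≥ S. Then W(u) > π(α − S)·G(S)², where W(u) ≥ (π/2)∫_{-1}^1 u(x)u''(x)²(1+u'(x)²)^(-5/2) dx. -/
import Mathlib

open MeasureTheory Real

noncomputable def G (t : ℝ) : ℝ := ∫ τ in (0:ℝ)..t, (1 + τ^2) ^ (-(5/4) : ℝ)

lemma cs_aux {f : ℝ → ℝ} {a b : ℝ} (hab : a ≤ b)
    (hf : IntervalIntegrable f volume a b)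
    (hf2 : IntervalIntegrable (fun x => f x ^ 2) volume a b) :
    (∫ x in a..b, f x) ^ 2 ≤ (b - a) * ∫ x in a..b, f x ^ 2 := by
  rcases eq_or_lt_of_le hab with rfl | hlt
  · simp
  have hL0 : (0:ℝ) < b - a := by linarith
  set I := ∫ x in a..b, f x with hI
  set c := I / (b - a) with hc
  have key : 0 ≤ ∫ x in a..b, (f x - c) ^ 2 :=
    intervalIntegral.integral_nonneg hab (fun x _ => sq_nonneg _)
  have expand : (∫ x in a..b, (f x - c) ^ 2)
      = (∫ x in a..b, f x ^ 2) - 2 * c * I + (b - a) * c ^ 2 := by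
    have h1 : ∀ x : ℝ, (f x - c) ^ 2 = (f x ^ 2 - 2 * c * f x) + c ^ 2 := by
      intro x; ring
    simp_rw [h1]
    rw [intervalIntegral.integral_add (hf2.sub (hf.const_mul _)) intervalIntegrable_const,
        intervalIntegral.integral_sub hf2 (hf.const_mul _),
        intervalIntegral.integral_const_mul, intervalIntegral.integral_const]
    simp only [smul_eq_mul]
    try ring
  have hIc : I = c * (b - a) := by
    rw [hc]; field_simp
  have h2 : (b - a) * c ^ 2 ≤ ∫ x in a..b, f x ^ 2 := by
    rw [expand] at key
    have h3 : 2 * c * I = 2 * ((b - a) * c ^ 2) := by rw [hIc]; ring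
    linarith
  calc I ^ 2 = (b - a) * ((b - a) * c ^ 2) := by rw [hIc]; ring
    _ ≤ (b - a) * ∫ x in a..b, f x ^ 2 := by
        exact mul_le_mul_of_nonneg_left h2 (le_of_lt hL0)

/-- Proposition 3.4: if the slope of `u ∈ N_α` reaches `S ∈ (0,α)` somewhere,
then `W(u) > π(α-S)G(S)²`. -/
theorem energy_lower_bound_from_slope (u u' u'' : ℝ → ℝ) (α S : ℝ)
    (hα : 0 < α) (hS : S ∈ Set.Ioo (0:ℝ) α)
    (hu : ∀ x, HasDerivAt u (u' x) x)
    (hu' : ∀ x, HasDerivAt u' (u'' x) x)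
    (hu'c : Continuous u')
    (hpos : ∀ x ∈ Set.Icc (-1:ℝ) 1, 0 < u x)
    (heven : ∀ x, u x = u (-x))
    (hb1 : u 1 = α) (hb2 : u (-1) = α) (hb3 : u' 1 = 0) (hb4 : u' (-1) = 0)
    (hint1 : IntervalIntegrable (fun x =>
        u x * u'' x ^ 2 * (1 + u' x ^ 2) ^ (-(5/2) : ℝ)) volume (-1) 1)
    (hint2 : IntervalIntegrable (fun x =>
        (u x * Real.sqrt (1 + u' x ^ 2))⁻¹) volume (-1) 1)
    (hslope : ∃ x ∈ Set.Icc (-1:ℝ) 1, S ≤ |u' x|) :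
    π * (α - S) * G S ^ 2
      < (π / 2) * (∫ x in (-1:ℝ)..1, u x * u'' x ^ 2 * (1 + u' x ^ 2) ^ (-(5/2) : ℝ))
          + (π / 2) * ∫ x in (-1:ℝ)..1, (u x * Real.sqrt (1 + u' x ^ 2))⁻¹ := by
  obtain ⟨hS0, hSα⟩ := hS
  -- basic continuity
  have hucont : Continuous u := by
    rw [continuous_iff_continuousAt]; exact fun x => (hu x).continuousAt
  -- auxiliary functions
  set g : ℝ → ℝ := fun t => (1 + t ^ 2) ^ (-(5/4) : ℝ) with hg
  have hbase : ∀ t : ℝ, (0:ℝ) < 1 + t ^ 2 := fun t => by positivity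
  have hgc : Continuous g := by
    apply Continuous.rpow_const
    · exact continuous_const.add (continuous_pow 2)
    · intro t; left; exact ne_of_gt (hbase t)
  have hG' : ∀ t, HasDerivAt G (g t) t := fun t =>
    (hgc.integral_hasStrictDerivAt 0 t).hasDerivAt
  set K : ℝ → ℝ := fun x => g (u' x) * u'' x with hK
  set F : ℝ → ℝ := fun x => u x * u'' x ^ 2 * (1 + u' x ^ 2) ^ (-(5/2) : ℝ) with hF
  have hK2 : ∀ x, K x ^ 2 = u'' x ^ 2 * (1 + u' x ^ 2) ^ (-(5/2) : ℝ) := by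
    intro x
    have : (((1 + u' x ^ 2) ^ (-(5/4) : ℝ)) : ℝ) ^ (2:ℕ)
        = (1 + u' x ^ 2) ^ (-(5/2) : ℝ) := by
      rw [← Real.rpow_natCast ((1 + u' x ^ 2) ^ (-(5/4) : ℝ)) 2,
          ← Real.rpow_mul (le_of_lt (hbase (u' x)))]
      norm_num
    simp only [hK, mul_pow]
    rw [this]; ring
  have hFK : ∀ x, F x = u x * K x ^ 2 := by
    intro x; rw [hK2]; simp only [hF]; ring
  -- oddness of u'
  have hodd : ∀ x, u' (-x) = - u' x := by
    intro x
    have h1 : HasDerivAt (fun y : ℝ => u (-y)) (u' (-x) * (-1)) x :=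
      (hu (-x)).comp x (hasDerivAt_neg x)
    have h2 : (fun y : ℝ => u (-y)) = u := by
      funext y; exact (heven y).symm
    rw [h2] at h1
    have := h1.unique (hu x)
    linarith
  -- evenness of u''
  have heven'' : ∀ x, u'' (-x) = u'' x := by
    intro x
    have h1 : HasDerivAt (fun y : ℝ => -u' (-y)) (-(u'' (-x) * (-1))) x :=
      (((hu' (-x)).comp x (hasDerivAt_neg x))).neg
    have h2 : (fun y : ℝ => -u' (-y)) = u' := by
      funext y; rw [hodd]; ring
    rw [h2] at h1
    have := h1.unique (hu' x)
    linarith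
  have hFeven : ∀ x, F (-x) = F x := by
    intro x; simp only [hF]
    rw [heven'', hodd, ← heven]; ring_nf
  -- the point x₀
  set T : Set ℝ := {x | x ∈ Set.Icc (-1:ℝ) 0 ∧ S ≤ |u' x|} with hT
  have hTne : T.Nonempty := by
    obtain ⟨x₁, hx₁, hx₁S⟩ := hslope
    refine ⟨-|x₁|, ⟨⟨?_, ?_⟩, ?_⟩⟩
    · have : |x₁| ≤ 1 := abs_le.mpr ⟨hx₁.1, hx₁.2⟩
      linarith
    · linarith [abs_nonneg x₁]
    · rcases le_or_gt 0 x₁ with h | h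
      · rw [abs_of_nonneg h, hodd, abs_neg]; exact hx₁S
      · rw [abs_of_neg h, neg_neg]; exact hx₁S
  have hTclosed : IsClosed T := by
    have : T = Set.Icc (-1:ℝ) 0 ∩ (fun x => |u' x|) ⁻¹' Set.Ici S := by
      ext x; simp [hT, Set.mem_setOf_eq, and_comm]
    rw [this]
    exact isClosed_Icc.inter (isClosed_Ici.preimage hu'c.abs)
  have hTbdd : BddBelow T := ⟨-1, fun x hx => hx.1.1⟩
  set x₀ := sInf T with hx₀
  have hx₀T : x₀ ∈ T := hTclosed.csInf_mem hTne hTbdd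
  have hx₀mem : x₀ ∈ Set.Icc (-1:ℝ) 0 := hx₀T.1
  have hx₀S : S ≤ |u' x₀| := hx₀T.2
  have hx₀gt : -1 < x₀ := by
    rcases eq_or_lt_of_le hx₀mem.1 with h | h
    · exfalso; rw [← h, hb4] at hx₀S; simp at hx₀S; linarith
    · exact h
  have hx₀le : x₀ ≤ 0 := hx₀mem.2
  have hsmall : ∀ y ∈ Set.Ico (-1:ℝ) x₀, |u' y| < S := by
    intro y hy
    by_contra h
    push_neg at h
    have : y ∈ T := ⟨⟨hy.1, le_of_lt (lt_of_lt_of_le hy.2 hx₀le)⟩, h⟩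
    have := csInf_le hTbdd this
    rw [← hx₀] at this
    exact absurd hy.2 (not_lt.mpr this)
  have hbound : ∀ y ∈ Set.Icc (-1:ℝ) x₀, |u' y| ≤ S := by
    intro y hy
    rcases lt_or_eq_of_le hy.2 with h | he
    · exact le_of_lt (hsmall y ⟨hy.1, h⟩)
    · rw [he]
      have hne : Filter.NeBot (nhdsWithin x₀ (Set.Iio x₀)) := nhdsLT_neBot x₀
      have hev : ∀ᶠ z in nhdsWithin x₀ (Set.Iio x₀), |u' z| ≤ S := by
        have hmem : Set.Ioi (-1:ℝ) ∈ nhdsWithin x₀ (Set.Iio x₀) :=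
          nhdsWithin_le_nhds (Ioi_mem_nhds hx₀gt)
        filter_upwards [hmem, self_mem_nhdsWithin] with z hz1 hz2
        exact le_of_lt (hsmall z ⟨le_of_lt hz1, hz2⟩)
      have htd : Filter.Tendsto (fun z => |u' z|) (nhdsWithin x₀ (Set.Iio x₀))
          (nhds (|u' x₀|)) := ((hu'c.abs.tendsto x₀)).mono_left nhdsWithin_le_nhds
      exact le_of_tendsto htd hev
  have hx₀abs : |u' x₀| = S := le_antisymm (hbound x₀ ⟨hx₀mem.1, le_refl _⟩) hx₀S
  -- lower bound for u on [-1, x₀]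
  have hulow : ∀ y ∈ Set.Icc (-1:ℝ) x₀, α - S ≤ u y := by
    intro y hy
    have hy1 : (-1:ℝ) ≤ y := hy.1
    have hftc : ∫ z in (-1:ℝ)..y, u' z = u y - u (-1) :=
      intervalIntegral.integral_eq_sub_of_hasDerivAt
        (fun z _ => hu z) (hu'c.intervalIntegrable _ _)
    have hmono : ∫ z in (-1:ℝ)..y, (-S) ≤ ∫ z in (-1:ℝ)..y, u' z := by
      apply intervalIntegral.integral_mono_on hy1 intervalIntegrable_const
        (hu'c.intervalIntegrable _ _)
      intro z hz
      have : |u' z| ≤ S := hbound z ⟨hz.1, le_trans hz.2 hy.2⟩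
      have := neg_abs_le (u' z)
      linarith [abs_le.mp ‹|u' z| ≤ S›]
    rw [intervalIntegral.integral_const] at hmono
    simp only [smul_eq_mul] at hmono
    have hyle : y ≤ 0 := le_trans hy.2 hx₀le
    have : (y - (-1)) * (-S) ≥ -S := by nlinarith
    rw [hb2] at hftc
    linarith
  -- integrability facts
  have huIcc : Set.uIcc (-1:ℝ) 1 = Set.Icc (-1:ℝ) 1 := Set.uIcc_of_le (by norm_num)
  have hK2int : IntervalIntegrable (fun x => K x ^ 2) volume (-1) 1 := by
    have hcont_inv : ContinuousOn (fun x => (u x)⁻¹) (Set.uIcc (-1:ℝ) 1) := by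
      rw [huIcc]
      exact (hucont.continuousOn).inv₀ (fun x hx => ne_of_gt (hpos x hx))
    have h1 := hint1.mul_continuousOn hcont_inv
    rw [intervalIntegrable_iff] at h1 ⊢
    apply h1.congr_fun ?_ measurableSet_uIoc
    intro x hx
    rw [Set.uIoc_of_le (by norm_num : (-1:ℝ) ≤ 1)] at hx
    have hne : u x ≠ 0 := ne_of_gt (hpos x ⟨le_of_lt hx.1, hx.2⟩)
    show F x * (u x)⁻¹ = K x ^ 2
    rw [hFK]
    field_simp
  have hKmeas : Measurable K := by
    have hd : u'' = deriv u' := funext fun x => ((hu' x).deriv).symm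
    have : Measurable u'' := by rw [hd]; exact measurable_deriv u'
    exact ((hgc.comp hu'c).measurable).mul this
  have hKint : IntervalIntegrable K volume (-1) 1 := by
    apply IntervalIntegrable.mono_fun' (g := fun x => 1 + K x ^ 2)
      (intervalIntegrable_const.add hK2int)
      (hKmeas.aestronglyMeasurable)
    filter_upwards with x
    have : |K x| ≤ 1 + K x ^ 2 := by nlinarith [sq_abs (K x), sq_nonneg (|K x| - 1)]
    simpa using this
  have hsub1 : Set.uIcc (-1:ℝ) x₀ ⊆ Set.uIcc (-1:ℝ) 1 := by
    rw [huIcc, Set.uIcc_of_le (le_of_lt hx₀gt)]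
    exact Set.Icc_subset_Icc (le_refl _) (le_trans hx₀le (by norm_num))
  have hKintx : IntervalIntegrable K volume (-1) x₀ := hKint.mono_set hsub1
  have hK2intx : IntervalIntegrable (fun x => K x ^ 2) volume (-1) x₀ := hK2int.mono_set hsub1
  -- FTC / change of variables
  have hftcK : ∫ x in (-1:ℝ)..x₀, K x = G (u' x₀) := by
    have h := intervalIntegral.integral_eq_sub_of_hasDerivAt
      (f := fun y => G (u' y)) (f' := K)
      (fun x _ => ((hG' (u' x)).comp x (hu' x))) hKintx
    have h' : ∫ x in (-1:ℝ)..x₀, K x = G (u' x₀) - G (u' (-1)) := h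
    rw [h', hb4]
    have : G 0 = 0 := by simp [G]
    rw [this, sub_zero]
  -- G is odd
  have hGodd : ∀ t : ℝ, G (-t) = - G t := by
    intro t
    have h1 : (∫ τ in (0:ℝ)..t, g (-τ)) = ∫ τ in (-t)..(0:ℝ), g τ := by
      simpa using intervalIntegral.integral_comp_neg (a := (0:ℝ)) (b := t) (f := g)
    have h2 : ∀ τ : ℝ, g (-τ) = g τ := by intro τ; simp [hg]
    simp_rw [h2] at h1
    have : G (-t) = - ∫ τ in (-t)..(0:ℝ), g τ := by
      rw [G, intervalIntegral.integral_symm]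
    rw [this, ← h1]
    rfl
  have hGsq : (G (u' x₀)) ^ 2 = G S ^ 2 := by
    rcases abs_eq (le_of_lt hS0) |>.mp hx₀abs with h | h
    · rw [h]
    · rw [h, hGodd, neg_sq]
  -- Cauchy–Schwarz
  have hcs : G S ^ 2 ≤ ∫ x in (-1:ℝ)..x₀, K x ^ 2 := by
    have h1 := cs_aux (le_of_lt hx₀gt) hKintx hK2intx
    rw [hftcK, hGsq] at h1
    have h2 : (0:ℝ) ≤ ∫ x in (-1:ℝ)..x₀, K x ^ 2 :=
      intervalIntegral.integral_nonneg (le_of_lt hx₀gt) (fun x _ => sq_nonneg _)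
    nlinarith
  -- weighted bound
  have hFint : IntervalIntegrable F volume (-1) 1 := hint1
  have hFintx : IntervalIntegrable F volume (-1) x₀ := hFint.mono_set hsub1
  have hweight : (α - S) * G S ^ 2 ≤ ∫ x in (-1:ℝ)..x₀, F x := by
    have h1 : ∫ x in (-1:ℝ)..x₀, (α - S) * K x ^ 2 ≤ ∫ x in (-1:ℝ)..x₀, F x := by
      apply intervalIntegral.integral_mono_on (le_of_lt hx₀gt)
        (hK2intx.const_mul _) hFintx
      intro x hx
      rw [hFK]
      exact mul_le_mul_of_nonneg_right (hulow x hx) (sq_nonneg _)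
    rw [intervalIntegral.integral_const_mul] at h1
    have h2 := mul_le_mul_of_nonneg_left hcs (le_of_lt (by linarith : (0:ℝ) < α - S))
    linarith
  -- doubling by evenness
  have hFint0 : IntervalIntegrable F volume (-1) 0 := by
    apply hFint.mono_set
    rw [huIcc, Set.uIcc_of_le (by norm_num : (-1:ℝ) ≤ 0)]
    exact Set.Icc_subset_Icc (le_refl _) (by norm_num)
  have hFint01 : IntervalIntegrable F volume 0 1 := by
    apply hFint.mono_set
    rw [huIcc, Set.uIcc_of_le (by norm_num : (0:ℝ) ≤ 1)]
    exact Set.Icc_subset_Icc (by norm_num) (le_refl _)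
  have hdouble : ∫ x in (-1:ℝ)..1, F x = 2 * ∫ x in (-1:ℝ)..0, F x := by
    have hsplit : ∫ x in (-1:ℝ)..1, F x
        = (∫ x in (-1:ℝ)..0, F x) + ∫ x in (0:ℝ)..1, F x :=
      (intervalIntegral.integral_add_adjacent_intervals hFint0 hFint01).symm
    have hrefl : ∫ x in (0:ℝ)..1, F x = ∫ x in (-1:ℝ)..0, F x := by
      have := intervalIntegral.integral_comp_neg (a := (0:ℝ)) (b := 1) (f := F)
      simp_rw [hFeven] at this
      simpa using this
    rw [hsplit, hrefl]; ring
  have hFnonneg : ∀ x ∈ Set.Icc (-1:ℝ) 1, 0 ≤ F x := by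
    intro x hx
    have := hpos x hx
    have h2 : (0:ℝ) < (1 + u' x ^ 2) ^ (-(5/2) : ℝ) := Real.rpow_pos_of_pos (hbase _) _
    simp only [hF]
    positivity
  have htail : (0:ℝ) ≤ ∫ x in x₀..0, F x := by
    apply intervalIntegral.integral_nonneg hx₀le
    intro x hx
    exact hFnonneg x ⟨le_trans (le_of_lt hx₀gt) hx.1, le_trans hx.2 (by norm_num)⟩
  have hFintx0 : IntervalIntegrable F volume x₀ 0 := by
    apply hFint.mono_set
    rw [huIcc, Set.uIcc_of_le hx₀le]
    exact Set.Icc_subset_Icc (le_of_lt hx₀gt) (by norm_num)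
  have hge : 2 * ((α - S) * G S ^ 2) ≤ ∫ x in (-1:ℝ)..1, F x := by
    rw [hdouble]
    have : ∫ x in (-1:ℝ)..0, F x = (∫ x in (-1:ℝ)..x₀, F x) + ∫ x in x₀..0, F x :=
      (intervalIntegral.integral_add_adjacent_intervals hFintx hFintx0).symm
    rw [this]
    nlinarith
  -- second integral positive
  have hpos2 : (0:ℝ) < ∫ x in (-1:ℝ)..1, (u x * Real.sqrt (1 + u' x ^ 2))⁻¹ := by
    apply intervalIntegral.intervalIntegral_pos_of_pos_on hint2
    · intro x hx
      have h1 : 0 < u x := hpos x ⟨le_of_lt hx.1, le_of_lt hx.2⟩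
      have h2 : 0 < Real.sqrt (1 + u' x ^ 2) := Real.sqrt_pos.mpr (hbase _)
      positivity
    · norm_num
  -- conclusion
  have hpi : (0:ℝ) < π := Real.pi_pos
  have h1 := mul_le_mul_of_nonneg_left hge (le_of_lt (half_pos hpi))
  have h2 := mul_lt_mul_of_pos_left hpos2 (half_pos hpi)
  simp only [hF] at h1
  nlinarith
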